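/- arXiv:2211.05079 — 4 statements merged into one kernel-verified Lean document; each statement's English description precedes it below -/
import Mathlib

section
/- Let s ∈ (0,1], δ₀ ∈ (0,1), δ₁ ∈ (0,1), and let J, J' be real numbers with 0 < J' ≤ J − 1. There exists a constant C > 0, depending only on s, δ₀, δ₁, J, J', such that for all ν ∈ (0,1), t ≥ 0, and all k, ξ ∈ ℝ^d with |k| ≤ δ₀^{−1}ν and |ξ| ≥ ν: (1 + δ₁ ν^{−1}|k|² t)^{J'} ≤ C·(1 + νt)^{−1}·(1 + δ₁ ν^{1/(1+2s)} |ξ|^{2s/(1+2s)} t)^{J}. -/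
set_option maxHeartbeats 1000000 in
/-- **Comparison of powers of the decay brackets across frequency regimes**
(Lemma 5.1, inequality (5.3)): for `s ∈ (0,1]`, `δ₀, δ₁ ∈ (0,1)` and real exponents
`0 < J' ≤ J − 1`, there is `C > 0`, depending only on `s, δ₀, δ₁, J, J'`, such that for
all `ν ∈ (0,1)`, `t ≥ 0`, and all `k, ξ` with `|k| ≤ δ₀⁻¹ ν`, `|ξ| ≥ ν`,
`(1 + δ₁ ν⁻¹|k|² t)^{J'} ≤ C (1+νt)⁻¹ (1 + δ₁ ν^{1/(1+2s)}|ξ|^{2s/(1+2s)} t)^{J}`. -/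
theorem taylor_bracket_pow_le_enhanced_bracket_pow
    (d : ℕ) (s δ₀ δ₁ J J' : ℝ) (hs : s ∈ Set.Ioc (0:ℝ) 1)
    (h0 : δ₀ ∈ Set.Ioo (0:ℝ) 1) (h1 : δ₁ ∈ Set.Ioo (0:ℝ) 1)
    (hJ' : 0 < J') (hJ : J' ≤ J - 1) :
    ∃ C : ℝ, 0 < C ∧
      ∀ ν ∈ Set.Ioo (0:ℝ) 1, ∀ t : ℝ, 0 ≤ t →
        ∀ k ξ : EuclideanSpace ℝ (Fin d), ‖k‖ ≤ δ₀⁻¹ * ν → ν ≤ ‖ξ‖ →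
          (1 + δ₁ * ν⁻¹ * ‖k‖ ^ 2 * t) ^ J' ≤
            C * (1 + ν * t)⁻¹ *
              (1 + δ₁ * ν ^ (1 / (1 + 2 * s)) * ‖ξ‖ ^ (2 * s / (1 + 2 * s)) * t) ^ J := by
  obtain ⟨hs0, hs1⟩ := hs
  obtain ⟨h00, h01⟩ := h0
  obtain ⟨h10, h11⟩ := h1
  have hJpos : 0 < J := by linarith
  refine ⟨δ₀ ^ (-(2 * J')) * δ₁ ^ (-J), by positivity, ?_⟩
  rintro ν ⟨hν0, hν1⟩ t ht k ξ hk hξ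
  have hA : (1:ℝ) ≤ 1 + ν * t := by nlinarith
  have hA0 : (0:ℝ) < 1 + ν * t := by linarith
  set a := 1 / (1 + 2 * s) with ha
  set b := 2 * s / (1 + 2 * s) with hb
  have hden : (0:ℝ) < 1 + 2 * s := by linarith
  have ha0 : 0 < a := by positivity
  have hb0 : 0 < b := by positivity
  have hab : a + b = 1 := by
    rw [ha, hb, ← add_div, div_self hden.ne']
  -- Lower bound for the enhanced bracket
  have hξν : ν ^ a * ν ^ b ≤ ν ^ a * ‖ξ‖ ^ b := by
    have : ν ^ b ≤ ‖ξ‖ ^ b := Real.rpow_le_rpow hν0.le hξ hb0.le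
    exact mul_le_mul_of_nonneg_left this (Real.rpow_nonneg hν0.le a)
  have hνab : ν ^ a * ν ^ b = ν := by
    rw [← Real.rpow_add hν0, hab, Real.rpow_one]
  have hB : δ₁ * (1 + ν * t) ≤ 1 + δ₁ * ν ^ a * ‖ξ‖ ^ b * t := by
    have h1' : δ₁ * ν * t ≤ δ₁ * ν ^ a * ‖ξ‖ ^ b * t := by
      have h := mul_le_mul_of_nonneg_right (mul_le_mul_of_nonneg_left hξν h10.le) ht
      calc δ₁ * ν * t = δ₁ * (ν ^ a * ν ^ b) * t := by rw [hνab]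
        _ ≤ δ₁ * (ν ^ a * ‖ξ‖ ^ b) * t := h
        _ = δ₁ * ν ^ a * ‖ξ‖ ^ b * t := by ring
    nlinarith
  have hB0 : (0:ℝ) < δ₁ * (1 + ν * t) := by positivity
  -- Upper bound for the Taylor bracket
  have hL : 1 + δ₁ * ν⁻¹ * ‖k‖ ^ 2 * t ≤ δ₀⁻¹ ^ 2 * (1 + ν * t) := by
    have hk0 : (0:ℝ) ≤ ‖k‖ := norm_nonneg _
    have hki : δ₀⁻¹ ^ 2 ≥ 1 := one_le_pow₀ (one_le_inv_iff₀.mpr ⟨h00, h01.le⟩)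
    have h2 : ‖k‖ ^ 2 ≤ (δ₀⁻¹ * ν) ^ 2 := by
      have := mul_le_mul hk hk hk0 (by positivity)
      nlinarith
    have hνi : (0:ℝ) < ν⁻¹ := by positivity
    have h4 : ν⁻¹ * ‖k‖ ^ 2 ≤ δ₀⁻¹ ^ 2 * ν := by
      have heq : ν⁻¹ * (δ₀⁻¹ * ν) ^ 2 = δ₀⁻¹ ^ 2 * ν := by
        field_simp
      calc ν⁻¹ * ‖k‖ ^ 2 ≤ ν⁻¹ * (δ₀⁻¹ * ν) ^ 2 :=
            mul_le_mul_of_nonneg_left h2 hνi.le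
        _ = δ₀⁻¹ ^ 2 * ν := heq
    have h3 : δ₁ * ν⁻¹ * ‖k‖ ^ 2 * t ≤ δ₀⁻¹ ^ 2 * (ν * t) := by
      nlinarith [mul_le_mul_of_nonneg_right h4 ht,
        mul_nonneg (mul_nonneg (mul_nonneg (sub_nonneg.mpr h11.le) hνi.le)
          (sq_nonneg ‖k‖)) ht]
    nlinarith
  have hL0 : (0:ℝ) ≤ 1 + δ₁ * ν⁻¹ * ‖k‖ ^ 2 * t := by positivity
  -- Combine
  have step1 : (1 + δ₁ * ν⁻¹ * ‖k‖ ^ 2 * t) ^ J' ≤ (δ₀⁻¹ ^ 2 * (1 + ν * t)) ^ J' :=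
    Real.rpow_le_rpow hL0 hL hJ'.le
  have step2 : (δ₁ * (1 + ν * t)) ^ J ≤ (1 + δ₁ * ν ^ a * ‖ξ‖ ^ b * t) ^ J :=
    Real.rpow_le_rpow hB0.le hB hJpos.le
  have hd2 : δ₀⁻¹ ^ 2 = δ₀ ^ (-2 : ℝ) := by
    rw [Real.rpow_neg h00.le, inv_pow, ← Real.rpow_natCast δ₀ 2]
    norm_num
  have e1 : (δ₀⁻¹ ^ 2 * (1 + ν * t)) ^ J' =
      δ₀ ^ (-(2 * J')) * (1 + ν * t) ^ J' := by
    rw [Real.mul_rpow (by positivity) hA0.le, hd2, ← Real.rpow_mul h00.le]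
    ring_nf
  have e2 : (δ₁ * (1 + ν * t)) ^ J = δ₁ ^ J * (1 + ν * t) ^ J :=
    Real.mul_rpow h10.le hA0.le
  have hδ : δ₁ ^ (-J) * δ₁ ^ J = 1 := by
    rw [← Real.rpow_add h10, neg_add_cancel, Real.rpow_zero]
  have hAe : (1 + ν * t) ^ (J - 1) = (1 + ν * t)⁻¹ * (1 + ν * t) ^ J := by
    rw [Real.rpow_sub hA0, Real.rpow_one, div_eq_inv_mul]
  calc (1 + δ₁ * ν⁻¹ * ‖k‖ ^ 2 * t) ^ J'
      ≤ δ₀ ^ (-(2 * J')) * (1 + ν * t) ^ J' := by rw [← e1]; exact step1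
    _ ≤ δ₀ ^ (-(2 * J')) * (1 + ν * t) ^ (J - 1) :=
        mul_le_mul_of_nonneg_left (Real.rpow_le_rpow_of_exponent_le hA hJ)
          (Real.rpow_nonneg h00.le _)
    _ = δ₀ ^ (-(2 * J')) * δ₁ ^ (-J) * (1 + ν * t)⁻¹ * (δ₁ ^ J * (1 + ν * t) ^ J) := by
        rw [hAe]
        linear_combination
          (-(δ₀ ^ (-(2 * J')) * (1 + ν * t)⁻¹ * (1 + ν * t) ^ J)) * hδ
    _ ≤ δ₀ ^ (-(2 * J')) * δ₁ ^ (-J) * (1 + ν * t)⁻¹ *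
          (1 + δ₁ * ν ^ a * ‖ξ‖ ^ b * t) ^ J := by
        refine mul_le_mul_of_nonneg_left ?_ (by positivity)
        rw [← e2]; exact step2
end

section
/- Let λ > 0, ϖ > 0, m > 0, c > 0, C > 0, A ≥ 0, and let p ∈ (0,1) be such that p·m/ϖ ≥ 2. Suppose E : [0,∞) → [0,∞) is differentiable and satisfies, for every t ≥ 0 and every R ≥ 1, the differential inequality E'(t) ≤ −c·λ·R^{−ϖ}·E(t) + C·λ·R^{−m}·A. Then, setting δ_p = c(1−p)/2 and M̃ = p·m/ϖ − p, there exists a constant C' > 0 depending only on c, C, p, ϖ, m such that for all t ≥ 0: E(t) ≤ C'·( e^{−δ_p (λt)^{1−p}} E(0) + (1 + λt)^{−M̃} A ). -/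
open Real Set

lemma gronwall_step (c C ϖ m lam A : ℝ) (hc : 0 < c) (hC : 0 ≤ C) (hlam : 0 < lam)
    (hA : 0 ≤ A) (E E' : ℝ → ℝ)
    (hE : ∀ t, 0 ≤ t → HasDerivWithinAt E (E' t) (Set.Ici 0) t)
    (hbound : ∀ t, 0 ≤ t → ∀ R : ℝ, 1 ≤ R →
      E' t ≤ -c * lam * R ^ (-ϖ) * E t + C * lam * R ^ (-m) * A)
    (t : ℝ) (ht : 0 ≤ t) (R : ℝ) (hR : 1 ≤ R) :
    E t ≤ Real.exp (-(c * lam * R ^ (-ϖ)) * t) * E 0 + (C / c) * R ^ (ϖ - m) * A := by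
  have hR0 : (0:ℝ) < R := lt_of_lt_of_le one_pos hR
  set K : ℝ := -(c * lam * R ^ (-ϖ)) with hK
  set ε : ℝ := C * lam * R ^ (-m) * A with hε
  have hKneg : K < 0 := by
    have : 0 < c * lam * R ^ (-ϖ) := by positivity
    simpa [hK] using this
  have hεnn : 0 ≤ ε := by positivity
  have key : E t ≤ gronwallBound (E 0) K ε (t - 0) := by
    refine le_gronwallBound_of_liminf_deriv_right_le
      (f := E) (f' := E') (a := 0) (b := t)
      (fun x hx => ((hE x hx.1).continuousWithinAt).mono Icc_subset_Ici_self)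
      (fun x hx r hr => ((hE x hx.1).mono (Ici_subset_Ici.mpr hx.1)).liminf_right_slope_le hr)
      le_rfl (fun x hx => ?_) t ⟨ht, le_rfl⟩
    have := hbound x hx.1 R hR
    calc E' x ≤ -c * lam * R ^ (-ϖ) * E x + C * lam * R ^ (-m) * A := this
      _ = K * E x + ε := by ring
  have hKne : K ≠ 0 := ne_of_lt hKneg
  rw [gronwallBound_of_K_ne_0 hKne] at key
  simp only [sub_zero] at key
  have hKt : K * t ≤ 0 := mul_nonpos_of_nonpos_of_nonneg hKneg.le ht
  have hexp1 : Real.exp (K * t) ≤ 1 := Real.exp_le_one_iff.mpr hKt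
  have h2 : ε / K * (Real.exp (K * t) - 1) ≤ (C / c) * R ^ (ϖ - m) * A := by
    have hmain : ε / K * (Real.exp (K * t) - 1) ≤ ε / (-K) := by
      have : ε / K * (Real.exp (K * t) - 1) = ε / (-K) * (1 - Real.exp (K * t)) := by
        rw [div_neg]; ring
      rw [this]
      have h1 : 1 - Real.exp (K * t) ≤ 1 := by
        have := Real.exp_pos (K * t); linarith
      have hnn : 0 ≤ ε / (-K) := div_nonneg hεnn (by linarith)
      calc ε / (-K) * (1 - Real.exp (K * t)) ≤ ε / (-K) * 1 :=
            mul_le_mul_of_nonneg_left h1 hnn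
        _ = ε / (-K) := mul_one _
    refine hmain.trans (le_of_eq ?_)
    have hnegK : -K = c * lam * R ^ (-ϖ) := by rw [hK]; ring
    rw [hnegK, hε]
    have hsub : ϖ - m = -m - (-ϖ) := by ring
    rw [hsub, Real.rpow_sub hR0]
    have hRϖ : R ^ (-ϖ) ≠ 0 := by positivity
    field_simp
  calc E t ≤ E 0 * Real.exp (K * t) + ε / K * (Real.exp (K * t) - 1) := key
    _ ≤ Real.exp (K * t) * E 0 + (C / c) * R ^ (ϖ - m) * A := by
        rw [mul_comm (E 0)]; exact add_le_add le_rfl h2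


/-- **Abstract weak-Poincaré decay mechanism** (underlying Theorem 3.1 via Lemma 5.2):
if a nonnegative differentiable energy `E` on `[0,∞)` satisfies, for every `R ≥ 1`,
`E'(t) ≤ −c λ R^{−ϖ} E(t) + C λ R^{−m} A`, and `p ∈ (0,1)` is such that `p m/ϖ ≥ 2`,
then with `δ_p = c(1−p)/2` and `M̃ = p m/ϖ − p` one has
`E(t) ≤ C'( e^{−δ_p (λt)^{1−p}} E(0) + (1+λt)^{−M̃} A )`, where `C'` depends only on
`c, C, p, ϖ, m`. -/
theorem weak_poincare_decay
    (ϖ m c C p : ℝ) (hϖ : 0 < ϖ) (hm : 0 < m) (hc : 0 < c) (hC : 0 < C)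
    (hp : p ∈ Set.Ioo (0:ℝ) 1) (hpm : 2 ≤ p * m / ϖ) :
    ∃ C' : ℝ, 0 < C' ∧
      ∀ lam : ℝ, 0 < lam → ∀ A : ℝ, 0 ≤ A →
        ∀ E E' : ℝ → ℝ,
          (∀ t, 0 ≤ t → HasDerivWithinAt E (E' t) (Set.Ici 0) t) →
          (∀ t, 0 ≤ t → 0 ≤ E t) →
          (∀ t, 0 ≤ t → ∀ R : ℝ, 1 ≤ R →
            E' t ≤ -c * lam * R ^ (-ϖ) * E t + C * lam * R ^ (-m) * A) →
          ∀ t, 0 ≤ t →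
            E t ≤ C' * (Real.exp (-(c * (1 - p) / 2) * (lam * t) ^ (1 - p)) * E 0 +
              (1 + lam * t) ^ (-(p * m / ϖ - p)) * A) := by
  obtain ⟨hp0, hp1⟩ := hp
  set Mt : ℝ := p * m / ϖ - p with hMtdef
  have hMt : 0 < Mt := by
    have : p < 2 := by linarith
    simp only [hMtdef]; linarith
  refine ⟨(Real.exp c + 2 ^ Mt) * (1 + C / c), by positivity, ?_⟩
  set C' : ℝ := (Real.exp c + 2 ^ Mt) * (1 + C / c) with hC'def
  have hCc : 0 ≤ C / c := by positivity
  have h2M : (0:ℝ) < 2 ^ Mt := by positivity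
  have hec : 1 ≤ Real.exp c := by
    rw [← Real.exp_zero]; exact Real.exp_le_exp.mpr hc.le
  have hC'1 : 1 ≤ C' := by nlinarith
  have hC'ec : Real.exp c ≤ C' := by nlinarith
  have hC'2M : 2 ^ Mt * (C / c) ≤ C' := by nlinarith
  have hδ : 0 ≤ c * (1 - p) / 2 := by nlinarith
  have hδc : c * (1 - p) / 2 ≤ c := by nlinarith
  intro lam hlam A hA E E' hE hEnn hbound t ht
  set s : ℝ := lam * t with hsdef
  have hs0 : 0 ≤ s := by positivity
  have hE0 : 0 ≤ E 0 := hEnn 0 le_rfl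
  set T1 : ℝ := Real.exp (-(c * (1 - p) / 2) * s ^ (1 - p)) with hT1
  set T2 : ℝ := (1 + s) ^ (-Mt) with hT2
  have hT1pos : 0 < T1 := Real.exp_pos _
  have hT2pos : 0 < T2 := by
    have : (0:ℝ) < 1 + s := by linarith
    positivity
  have combine : ∀ X1 X2 : ℝ, X1 ≤ C' * T1 → X2 ≤ C' * T2 →
      E t ≤ X1 * E 0 + X2 * A → E t ≤ C' * (T1 * E 0 + T2 * A) := by
    intro X1 X2 b1 b2 hkey
    calc E t ≤ X1 * E 0 + X2 * A := hkey
      _ ≤ (C' * T1) * E 0 + (C' * T2) * A :=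
          add_le_add (mul_le_mul_of_nonneg_right b1 hE0) (mul_le_mul_of_nonneg_right b2 hA)
      _ = C' * (T1 * E 0 + T2 * A) := by ring
  have h2inv : (2:ℝ) ^ Mt * (2:ℝ) ^ (-Mt) = 1 := by
    rw [← Real.rpow_add two_pos]; simp
  rcases le_or_gt s 1 with hs | hs
  · -- small time: R = 1
    have key := gronwall_step c C ϖ m lam A hc hC.le hlam hA E E' hE hbound t ht 1 le_rfl
    simp only [Real.one_rpow, mul_one] at key
    refine combine _ _ ?_ ?_ key
    · -- exp(-(c*lam)*t) ≤ C' * T1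
      have h1 : Real.exp (-(c * lam) * t) ≤ 1 := by
        apply Real.exp_le_one_iff.mpr
        have : 0 ≤ c * lam * t := by positivity
        linarith
      have hsle : s ^ (1 - p) ≤ 1 := Real.rpow_le_one hs0 hs (by linarith)
      have hT1ge : Real.exp (-c) ≤ T1 := by
        apply Real.exp_le_exp.mpr
        have : c * (1 - p) / 2 * s ^ (1 - p) ≤ c := by
          calc c * (1 - p) / 2 * s ^ (1 - p) ≤ c * (1 - p) / 2 * 1 :=
                mul_le_mul_of_nonneg_left hsle hδ
            _ ≤ c := by linarith
        linarith
      calc Real.exp (-(c * lam) * t) ≤ 1 := h1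
        _ = Real.exp c * Real.exp (-c) := by rw [← Real.exp_add]; simp
        _ ≤ C' * T1 := mul_le_mul hC'ec hT1ge (Real.exp_pos _).le (by positivity)
    · -- C/c ≤ C' * T2
      have hT2ge : (2:ℝ) ^ (-Mt) ≤ T2 := by
        apply Real.rpow_le_rpow_of_nonpos (by linarith) (by linarith) (by linarith)
      calc C / c = (2 ^ Mt * (C / c)) * (2:ℝ) ^ (-Mt) := by
            rw [mul_comm ((2:ℝ)^Mt) (C/c), mul_assoc, h2inv, mul_one]
        _ ≤ C' * (2:ℝ) ^ (-Mt) := mul_le_mul_of_nonneg_right hC'2M (by positivity)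
        _ ≤ C' * T2 := mul_le_mul_of_nonneg_left hT2ge (by positivity)
  · -- large time: R = s^(p/ϖ)
    have hs0' : (0:ℝ) < s := lt_trans one_pos hs
    set R : ℝ := s ^ (p / ϖ) with hRdef
    have hR : 1 ≤ R := Real.one_le_rpow hs.le (by positivity)
    have key := gronwall_step c C ϖ m lam A hc hC.le hlam hA E E' hE hbound t ht R hR
    have hRϖ : R ^ (-ϖ) = s ^ (-p) := by
      rw [hRdef, ← Real.rpow_mul hs0]
      congr 1
      field_simp
    have hRm : R ^ (ϖ - m) = s ^ (-Mt) := by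
      rw [hRdef, ← Real.rpow_mul hs0]
      congr 1
      rw [hMtdef]
      field_simp
      ring
    have hexp : -(c * lam * R ^ (-ϖ)) * t = -(c * s ^ (1 - p)) := by
      have h1p : s ^ (1 - p) = s * s ^ (-p) := by
        rw [show (1:ℝ) - p = 1 + (-p) by ring, Real.rpow_add hs0', Real.rpow_one]
      rw [hRϖ, h1p, hsdef]
      ring
    rw [hRm, hexp] at key
    refine combine _ _ ?_ ?_ key
    · -- exp(-(c*s^(1-p))) ≤ C' * T1
      have hse : 0 ≤ s ^ (1 - p) := Real.rpow_nonneg hs0 _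
      have h1 : Real.exp (-(c * s ^ (1 - p))) ≤ T1 := by
        apply Real.exp_le_exp.mpr
        nlinarith
      calc Real.exp (-(c * s ^ (1 - p))) ≤ T1 := h1
        _ ≤ C' * T1 := le_mul_of_one_le_left hT1pos.le hC'1
    · -- (C/c) * s^(-Mt) ≤ C' * T2
      have h2s : (2 * s) ^ (-Mt) ≤ T2 :=
        Real.rpow_le_rpow_of_nonpos (by linarith) (by linarith) (by linarith)
      have hmul : ((2:ℝ) * s) ^ (-Mt) = 2 ^ (-Mt) * s ^ (-Mt) :=
        Real.mul_rpow (by norm_num) hs0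
      have hsMt : 0 ≤ s ^ (-Mt) := Real.rpow_nonneg hs0 _
      calc C / c * s ^ (-Mt)
          = (2 ^ Mt * (C / c)) * (2 ^ (-Mt) * s ^ (-Mt)) := by
            rw [show (2:ℝ) ^ Mt * (C / c) * (2 ^ (-Mt) * s ^ (-Mt))
                = ((2:ℝ) ^ Mt * 2 ^ (-Mt)) * (C / c * s ^ (-Mt)) by ring, h2inv, one_mul]
        _ ≤ C' * (2 ^ (-Mt) * s ^ (-Mt)) := by
            apply mul_le_mul_of_nonneg_right hC'2M
            positivity
        _ = C' * (2 * s) ^ (-Mt) := by rw [hmul]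
        _ ≤ C' * T2 := mul_le_mul_of_nonneg_left h2s (by positivity)
end

section
/- Let p ∈ (0,1), δ ∈ (0,1] and M > 1 be real numbers. There exists a constant C > 0, depending only on p, δ, M, such that for all λ > 0 and all t ≥ 0: ∫₀^t λ e^{δ(λτ)^{1−p}} (1+λτ)^{−M} dτ ≤ C · e^{δ(λt)^{1−p}} · (1+λt)^{−(M−p)}. -/
open Real intervalIntegral

private lemma duh_cont_aux (δ q r : ℝ) (hq : 0 < q) :
    ContinuousOn (fun s : ℝ => Real.exp (δ * s ^ q) * (1 + s) ^ r) (Set.Ici (0:ℝ)) := by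
  have h1 : Continuous fun s : ℝ => Real.exp (δ * s ^ q) := by
    apply Real.continuous_exp.comp
    apply continuous_const.mul
    refine continuous_iff_continuousAt.mpr fun x => ?_
    exact Real.continuousAt_rpow_const x q (Or.inr hq.le)
  refine h1.continuousOn.mul ?_
  intro s hs
  have : (0:ℝ) < 1 + s := by simp at hs; linarith
  exact ((continuous_const.add continuous_id).continuousAt.rpow_const
    (Or.inl this.ne')).continuousWithinAt

private lemma duh_deriv (δ q r s : ℝ) (hs : 0 < s) :
    HasDerivAt (fun s : ℝ => Real.exp (δ * s ^ q) * (1 + s) ^ r)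
      (Real.exp (δ * s ^ q) * (δ * (q * s ^ (q - 1))) * (1 + s) ^ r +
        Real.exp (δ * s ^ q) * (r * (1 + s) ^ (r - 1))) s := by
  have h1 : HasDerivAt (fun s : ℝ => s ^ q) (q * s ^ (q - 1)) s :=
    Real.hasDerivAt_rpow_const (Or.inl hs.ne')
  have h3 : HasDerivAt (fun s : ℝ => Real.exp (δ * s ^ q))
      (Real.exp (δ * s ^ q) * (δ * (q * s ^ (q - 1)))) s := (h1.const_mul δ).exp
  have h4 : HasDerivAt (fun s : ℝ => (1:ℝ) + s) 1 s := by
    simpa using (hasDerivAt_id s).const_add (1:ℝ)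
  have h5 : HasDerivAt (fun s : ℝ => (1 + s) ^ r) (r * (1 + s) ^ (r - 1)) s := by
    have := (Real.hasDerivAt_rpow_const (p := r)
      (x := 1 + s) (Or.inl (by linarith : (1:ℝ) + s ≠ 0))).comp s h4
    simpa [Function.comp_def] using this
  exact h3.mul h5

set_option maxHeartbeats 1000000 in
private lemma duh_key (p δ M : ℝ) (hp : p ∈ Set.Ioo (0:ℝ) 1) (hδ : δ ∈ Set.Ioc (0:ℝ) 1)
    (hM : 1 < M) :
    ∃ C : ℝ, 0 < C ∧ ∀ T : ℝ, 0 ≤ T →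
      (∫ s in (0:ℝ)..T, Real.exp (δ * s ^ (1 - p)) * (1 + s) ^ (-M)) ≤
        C * Real.exp (δ * T ^ (1 - p)) * (1 + T) ^ (-(M - p)) := by
  obtain ⟨hp0, hp1⟩ := hp
  obtain ⟨hδ0, hδ1⟩ := hδ
  have hq : (0:ℝ) < 1 - p := by linarith
  have hMp : (0:ℝ) < M - p := by linarith
  set f : ℝ → ℝ := fun s => Real.exp (δ * s ^ (1 - p)) * (1 + s) ^ (-M) with hf_def
  set G : ℝ → ℝ := fun s => Real.exp (δ * s ^ (1 - p)) * (1 + s) ^ (-(M - p)) with hG_def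
  set G' : ℝ → ℝ := fun s =>
    Real.exp (δ * s ^ (1 - p)) * (δ * ((1 - p) * s ^ (1 - p - 1))) * (1 + s) ^ (-(M - p)) +
      Real.exp (δ * s ^ (1 - p)) * (-(M - p) * (1 + s) ^ (-(M - p) - 1)) with hG'_def
  set c : ℝ := δ * (1 - p) / 2 with hc_def
  have hc : 0 < c := by positivity
  set B : ℝ := 2 * (M - p) / (δ * (1 - p)) with hB_def
  have hB : 0 < B := by positivity
  set A : ℝ := B ^ (1 / (1 - p)) with hA_def
  have hA0 : 0 < A := Real.rpow_pos_of_pos hB _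
  set s₀ : ℝ := max 1 A with hs₀_def
  have hs₀1 : (1:ℝ) ≤ s₀ := le_max_left _ _
  have hs₀A : A ≤ s₀ := le_max_right _ _
  have hs₀pos : (0:ℝ) < s₀ := by linarith
  have hAq : A ^ (1 - p) = B := by
    rw [hA_def, ← Real.rpow_mul hB.le, one_div_mul_cancel hq.ne', Real.rpow_one]
  clear_value f G G' c B A s₀
  -- pointwise key inequality
  have hkey : ∀ s : ℝ, s₀ ≤ s → c * f s ≤ G' s := by
    intro s hs
    have hs1 : (1:ℝ) ≤ s := le_trans hs₀1 hs
    have hspos : (0:ℝ) < s := by linarith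
    have h1s : (0:ℝ) < 1 + s := by linarith
    have hE : (0:ℝ) < Real.exp (δ * s ^ (1 - p)) := Real.exp_pos _
    have hP : (0:ℝ) < (1 + s) ^ (-M) := Real.rpow_pos_of_pos h1s _
    have hterm1 : δ * (1 - p) * (1 + s) ^ (-M) ≤
        δ * ((1 - p) * s ^ (1 - p - 1)) * (1 + s) ^ (-(M - p)) := by
      have h2 : (1 + s) ^ (1 - p - 1) ≤ s ^ (1 - p - 1) :=
        Real.rpow_le_rpow_of_nonpos hspos (by linarith) (by linarith)
      have hsplit : (1 + s) ^ (-M) = (1 + s) ^ (1 - p - 1) * (1 + s) ^ (-(M - p)) := by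
        rw [← Real.rpow_add h1s]; congr 1; ring
      have hRpos : (0:ℝ) ≤ (1 + s) ^ (-(M - p)) := (Real.rpow_pos_of_pos h1s _).le
      have h3 : (1 + s) ^ (1 - p - 1) * (1 + s) ^ (-(M - p)) ≤
          s ^ (1 - p - 1) * (1 + s) ^ (-(M - p)) := mul_le_mul_of_nonneg_right h2 hRpos
      have h4 := mul_le_mul_of_nonneg_left h3 (show (0:ℝ) ≤ δ * (1 - p) by positivity)
      calc δ * (1 - p) * (1 + s) ^ (-M)
          = δ * (1 - p) * ((1 + s) ^ (1 - p - 1) * (1 + s) ^ (-(M - p))) := by rw [hsplit]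
        _ ≤ δ * (1 - p) * (s ^ (1 - p - 1) * (1 + s) ^ (-(M - p))) := h4
        _ = δ * ((1 - p) * s ^ (1 - p - 1)) * (1 + s) ^ (-(M - p)) := by ring
    have hterm2 : (M - p) * (1 + s) ^ (-(M - p) - 1) ≤ c * (1 + s) ^ (-M) := by
      have hBq : B ≤ (1 + s) ^ (1 - p) := by
        calc B = A ^ (1 - p) := hAq.symm
          _ ≤ (1 + s) ^ (1 - p) := Real.rpow_le_rpow hA0.le (by linarith) hq.le
      have hinv : (1 + s) ^ (-(1 - p)) ≤ B⁻¹ := by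
        rw [Real.rpow_neg h1s.le]
        exact inv_anti₀ hB hBq
      have hsplit2 : (1 + s) ^ (-(M - p) - 1) = (1 + s) ^ (-M) * (1 + s) ^ (-(1 - p)) := by
        rw [← Real.rpow_add h1s]; congr 1; ring
      have hMB : (M - p) * B⁻¹ = c := by
        rw [hB_def, hc_def]; field_simp
      calc (M - p) * (1 + s) ^ (-(M - p) - 1)
          = (M - p) * ((1 + s) ^ (-M) * (1 + s) ^ (-(1 - p))) := by rw [hsplit2]
        _ ≤ (M - p) * ((1 + s) ^ (-M) * B⁻¹) := by
            apply mul_le_mul_of_nonneg_left (mul_le_mul_of_nonneg_left hinv hP.le) hMp.le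
        _ = (M - p) * B⁻¹ * (1 + s) ^ (-M) := by ring
        _ = c * (1 + s) ^ (-M) := by rw [hMB]
    have a1 := mul_le_mul_of_nonneg_left hterm1 hE.le
    have a2 := mul_le_mul_of_nonneg_left hterm2 hE.le
    calc c * f s
        = Real.exp (δ * s ^ (1 - p)) * (δ * (1 - p) * (1 + s) ^ (-M)) -
            Real.exp (δ * s ^ (1 - p)) * (c * (1 + s) ^ (-M)) := by
          simp only [hf_def, hc_def]; ring
      _ ≤ Real.exp (δ * s ^ (1 - p)) * (δ * ((1 - p) * s ^ (1 - p - 1)) * (1 + s) ^ (-(M - p))) -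
            Real.exp (δ * s ^ (1 - p)) * ((M - p) * (1 + s) ^ (-(M - p) - 1)) := by
          linarith [a1, a2]
      _ = G' s := by simp only [hG'_def]; ring
  -- constants
  set K₀ : ℝ := Real.exp (δ * s₀ ^ (1 - p)) with hK₀_def
  have hK₀1 : (1:ℝ) ≤ K₀ := Real.one_le_exp
    (mul_nonneg hδ0.le (Real.rpow_nonneg hs₀pos.le _))
  set g₀ : ℝ := (1 + s₀) ^ (-(M - p)) with hg₀_def
  have hg₀ : (0:ℝ) < g₀ := Real.rpow_pos_of_pos (by linarith) _
  clear_value K₀ g₀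
  have hKsg : (0:ℝ) < K₀ * s₀ / g₀ :=
    div_pos (mul_pos (lt_of_lt_of_le one_pos hK₀1) hs₀pos) hg₀
  have hcinv : (0:ℝ) < c⁻¹ := inv_pos.mpr hc
  refine ⟨K₀ * s₀ / g₀ + c⁻¹, by linarith, ?_⟩
  set C : ℝ := K₀ * s₀ / g₀ + c⁻¹ with hC_def
  clear_value C
  have hCge : s₀ / g₀ ≤ C := by
    have h1 : s₀ / g₀ ≤ K₀ * s₀ / g₀ := by
      gcongr
      nlinarith [hs₀pos, hK₀1]
    have h2 : (0:ℝ) < c⁻¹ := by positivity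
    linarith
  -- basic integrability / positivity facts
  have hcontf : ContinuousOn f (Set.Ici (0:ℝ)) := by
    rw [hf_def]; exact duh_cont_aux δ (1 - p) (-M) hq
  have hfint : ∀ a b : ℝ, 0 ≤ a → 0 ≤ b → IntervalIntegrable f MeasureTheory.volume a b := by
    intro a b ha hb
    apply (hcontf.mono ?_).intervalIntegrable
    intro x hx
    rw [Set.mem_uIcc] at hx
    rcases hx with ⟨h1, _⟩ | ⟨h1, _⟩ <;> simp only [Set.mem_Ici] <;> linarith
  have hfpos : ∀ x : ℝ, 0 ≤ x → 0 < f x := by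
    intro x hx
    have h1x : (0:ℝ) < 1 + x := by linarith
    simp only [hf_def]
    exact mul_pos (Real.exp_pos _) (Real.rpow_pos_of_pos h1x _)
  have hcontG' : ContinuousOn G' (Set.Ici (1:ℝ)) := by
    intro x hx
    simp only [Set.mem_Ici] at hx
    have hx0 : (0:ℝ) < x := by linarith
    have h1x : (0:ℝ) < 1 + x := by linarith
    apply ContinuousAt.continuousWithinAt
    have hexp : ContinuousAt (fun s : ℝ => Real.exp (δ * s ^ (1 - p))) x := by
      exact Real.continuous_exp.continuousAt.comp
        (continuousAt_const.mul (Real.continuousAt_rpow_const x (1 - p) (Or.inl hx0.ne')))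
    have h1xc : ContinuousAt (fun s : ℝ => (1:ℝ) + s) x :=
      (continuous_const.add continuous_id).continuousAt
    have hr1 : ContinuousAt (fun s : ℝ => (1 + s) ^ (-(M - p))) x :=
      h1xc.rpow_const (Or.inl h1x.ne')
    have hr2 : ContinuousAt (fun s : ℝ => (1 + s) ^ (-(M - p) - 1)) x :=
      h1xc.rpow_const (Or.inl h1x.ne')
    have hmid : ContinuousAt (fun s : ℝ => s ^ (1 - p - 1)) x :=
      Real.continuousAt_rpow_const x _ (Or.inl hx0.ne')
    simp only [hG'_def]
    exact ((hexp.mul (continuousAt_const.mul (continuousAt_const.mul hmid))).mul hr1).add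
      (hexp.mul (continuousAt_const.mul hr2))
  intro T hT
  have hGoal : C * Real.exp (δ * T ^ (1 - p)) * (1 + T) ^ (-(M - p)) = C * G T := by
    simp only [hG_def]; ring
  rw [hGoal]
  rcases le_or_gt s₀ T with hTs | hTs
  · -- large T
    have hsub : Set.uIcc s₀ T ⊆ Set.Ici (1:ℝ) := by
      intro x hx
      rw [Set.mem_uIcc] at hx
      simp only [Set.mem_Ici]
      rcases hx with ⟨h1, _⟩ | ⟨h1, _⟩ <;> linarith
    have hG'int : IntervalIntegrable G' MeasureTheory.volume s₀ T :=
      (hcontG'.mono hsub).intervalIntegrable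
    have hFTC : ∫ s in s₀..T, G' s = G T - G s₀ := by
      have h := intervalIntegral.integral_eq_sub_of_hasDerivAt
        (f := fun s : ℝ => Real.exp (δ * s ^ (1 - p)) * (1 + s) ^ (-(M - p)))
        (f' := fun s : ℝ =>
          Real.exp (δ * s ^ (1 - p)) * (δ * ((1 - p) * s ^ (1 - p - 1))) * (1 + s) ^ (-(M - p)) +
            Real.exp (δ * s ^ (1 - p)) * (-(M - p) * (1 + s) ^ (-(M - p) - 1)))
        (a := s₀) (b := T) ?_ ?_
      · rw [hG_def, hG'_def]; exact h
      · intro x hx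
        rw [Set.uIcc_of_le hTs, Set.mem_Icc] at hx
        exact duh_deriv δ (1 - p) (-(M - p)) x (by linarith [hx.1])
      · rw [hG'_def] at hG'int; exact hG'int
    have hG'nonneg : ∀ x ∈ Set.Icc s₀ T, (0:ℝ) ≤ G' x := fun x hx =>
      le_trans (mul_pos hc (hfpos x (by linarith [hx.1]))).le (hkey x hx.1)
    have hGmono : G s₀ ≤ G T := by
      have h := intervalIntegral.integral_nonneg (μ := MeasureTheory.volume) hTs hG'nonneg
      rw [hFTC] at h
      linarith
    have hGs₀ : g₀ ≤ G s₀ := by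
      have : G s₀ = K₀ * g₀ := by simp only [hG_def, hK₀_def, hg₀_def]
      rw [this]
      nlinarith [hg₀, hK₀1]
    have hGT : g₀ ≤ G T := le_trans hGs₀ hGmono
    have htail : ∫ s in s₀..T, f s ≤ c⁻¹ * (G T - G s₀) := by
      have hcomp : ∫ s in s₀..T, f s ≤ ∫ s in s₀..T, c⁻¹ * G' s := by
        apply intervalIntegral.integral_mono_on hTs (hfint s₀ T hs₀pos.le hT)
          (hG'int.const_mul _)
        intro x hx
        have hk := hkey x hx.1
        calc f x = c⁻¹ * (c * f x) := (inv_mul_cancel_left₀ hc.ne' _).symm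
          _ ≤ c⁻¹ * G' x := mul_le_mul_of_nonneg_left hk (inv_nonneg.mpr hc.le)
      rwa [intervalIntegral.integral_const_mul, hFTC] at hcomp
    have hfront : ∫ s in (0:ℝ)..s₀, f s ≤ K₀ * s₀ := by
      have hb : ∀ x ∈ Set.Icc (0:ℝ) s₀, f x ≤ K₀ := by
        intro x hx
        have h1x : (1:ℝ) ≤ 1 + x := by linarith [hx.1]
        have h1 : (1 + x) ^ (-M) ≤ 1 :=
          Real.rpow_le_one_of_one_le_of_nonpos h1x (by linarith)
        have h2 : Real.exp (δ * x ^ (1 - p)) ≤ K₀ := by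
          rw [hK₀_def]
          exact Real.exp_le_exp.mpr
            (mul_le_mul_of_nonneg_left (Real.rpow_le_rpow hx.1 hx.2 hq.le) hδ0.le)
        calc f x ≤ Real.exp (δ * x ^ (1 - p)) * 1 := by
              simp only [hf_def]
              exact mul_le_mul_of_nonneg_left h1 (Real.exp_pos _).le
          _ ≤ K₀ := by rw [mul_one]; exact h2
      have h := intervalIntegral.integral_mono_on hs₀pos.le (hfint 0 s₀ le_rfl hs₀pos.le)
        intervalIntegrable_const hb
      rw [intervalIntegral.integral_const] at h
      simp only [sub_zero, smul_eq_mul] at h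
      linarith
    have hsplit : ∫ s in (0:ℝ)..T, f s = (∫ s in (0:ℝ)..s₀, f s) + ∫ s in s₀..T, f s :=
      (intervalIntegral.integral_add_adjacent_intervals (hfint 0 s₀ le_rfl hs₀pos.le)
        (hfint s₀ T hs₀pos.le hT)).symm
    have h1 : K₀ * s₀ ≤ K₀ * s₀ / g₀ * G T := by
      calc K₀ * s₀ = K₀ * s₀ / g₀ * g₀ := (div_mul_cancel₀ _ hg₀.ne').symm
        _ ≤ K₀ * s₀ / g₀ * G T := mul_le_mul_of_nonneg_left hGT hKsg.le
    have h2 : c⁻¹ * (G T - G s₀) ≤ c⁻¹ * G T := by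
      apply mul_le_mul_of_nonneg_left _ (inv_nonneg.mpr hc.le)
      linarith [lt_of_lt_of_le hg₀ hGs₀]
    rw [hsplit, hC_def, add_mul]
    linarith [hfront, htail, h1, h2]
  · -- small T
    have hKT1 : (1:ℝ) ≤ Real.exp (δ * T ^ (1 - p)) := Real.one_le_exp
      (mul_nonneg hδ0.le (Real.rpow_nonneg hT _))
    have hb : ∀ x ∈ Set.Icc (0:ℝ) T, f x ≤ Real.exp (δ * T ^ (1 - p)) := by
      intro x hx
      have h1x : (1:ℝ) ≤ 1 + x := by linarith [hx.1]
      have h1 : (1 + x) ^ (-M) ≤ 1 :=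
        Real.rpow_le_one_of_one_le_of_nonpos h1x (by linarith)
      have h2 : Real.exp (δ * x ^ (1 - p)) ≤ Real.exp (δ * T ^ (1 - p)) :=
        Real.exp_le_exp.mpr
          (mul_le_mul_of_nonneg_left (Real.rpow_le_rpow hx.1 hx.2 hq.le) hδ0.le)
      calc f x ≤ Real.exp (δ * x ^ (1 - p)) * 1 := by
            simp only [hf_def]
            exact mul_le_mul_of_nonneg_left h1 (Real.exp_pos _).le
        _ ≤ Real.exp (δ * T ^ (1 - p)) := by rw [mul_one]; exact h2
    have hI : ∫ s in (0:ℝ)..T, f s ≤ s₀ * Real.exp (δ * T ^ (1 - p)) := by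
      have h := intervalIntegral.integral_mono_on hT (hfint 0 T le_rfl hT)
        intervalIntegrable_const hb
      rw [intervalIntegral.integral_const] at h
      simp only [sub_zero, smul_eq_mul] at h
      exact le_trans h (mul_le_mul_of_nonneg_right hTs.le (Real.exp_pos _).le)
    have hGTlow : g₀ * Real.exp (δ * T ^ (1 - p)) ≤ G T := by
      have hr : g₀ ≤ (1 + T) ^ (-(M - p)) := by
        rw [hg₀_def]
        exact Real.rpow_le_rpow_of_nonpos (by linarith) (by linarith) (by linarith)
      have h2 : g₀ * Real.exp (δ * T ^ (1 - p)) ≤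
          (1 + T) ^ (-(M - p)) * Real.exp (δ * T ^ (1 - p)) :=
        mul_le_mul_of_nonneg_right hr (Real.exp_pos _).le
      simp only [hG_def]
      linarith [h2, (mul_comm ((1 + T) ^ (-(M - p))) (Real.exp (δ * T ^ (1 - p)))).le]
    have hGTpos : (0:ℝ) < G T :=
      lt_of_lt_of_le (mul_pos hg₀ (Real.exp_pos _)) hGTlow
    calc ∫ s in (0:ℝ)..T, f s ≤ s₀ * Real.exp (δ * T ^ (1 - p)) := hI
      _ = s₀ / g₀ * (g₀ * Real.exp (δ * T ^ (1 - p))) := by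
          rw [← mul_assoc, div_mul_cancel₀ _ hg₀.ne']
      _ ≤ s₀ / g₀ * G T := mul_le_mul_of_nonneg_left hGTlow (div_pos hs₀pos hg₀).le
      _ ≤ C * G T := mul_le_mul_of_nonneg_right hCge hGTpos.le

/-- **Duhamel integral estimate with stretched-exponential and polynomial weights**:
for `p ∈ (0,1)`, `δ ∈ (0,1]`, `M > 1`, there is `C > 0`, depending only on `p, δ, M`,
such that for all `λ > 0` and `t ≥ 0`,
`∫₀^t λ e^{δ(λτ)^{1−p}} (1+λτ)^{−M} dτ ≤ C e^{δ(λt)^{1−p}} (1+λt)^{−(M−p)}`. -/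
theorem duhamel_stretched_exp_estimate
    (p δ M : ℝ) (hp : p ∈ Set.Ioo (0:ℝ) 1) (hδ : δ ∈ Set.Ioc (0:ℝ) 1) (hM : 1 < M) :
    ∃ C : ℝ, 0 < C ∧
      ∀ lam : ℝ, 0 < lam → ∀ t : ℝ, 0 ≤ t →
        (∫ τ in (0:ℝ)..t, lam * Real.exp (δ * (lam * τ) ^ (1 - p)) * (1 + lam * τ) ^ (-M)) ≤
          C * Real.exp (δ * (lam * t) ^ (1 - p)) * (1 + lam * t) ^ (-(M - p)) := by
  obtain ⟨C, hC, hkey⟩ := duh_key p δ M hp hδ hM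
  refine ⟨C, hC, fun lam hlam t ht => ?_⟩
  have h1 : (∫ τ in (0:ℝ)..t, lam * Real.exp (δ * (lam * τ) ^ (1 - p)) * (1 + lam * τ) ^ (-M)) =
      ∫ s in (0:ℝ)..lam * t, Real.exp (δ * s ^ (1 - p)) * (1 + s) ^ (-M) := by
    have h2 := intervalIntegral.smul_integral_comp_mul_left
      (fun s : ℝ => Real.exp (δ * s ^ (1 - p)) * (1 + s) ^ (-M)) (a := 0) (b := t) lam
    rw [mul_zero] at h2
    rw [← h2, smul_eq_mul, ← intervalIntegral.integral_const_mul]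
    congr 1
    ext τ
    ring
  rw [h1]
  exact hkey (lam * t) (mul_nonneg hlam.le ht)
end

section
/- Let s ∈ (0,1]. Then for all η ∈ ℝ, all k ∈ ℝ with k ≠ 0, and all t > 0: ∫₀^t |η + kτ|^{2s} dτ ≥ (2^{−2s}/(1+2s)) · |k|^{2s} · t^{1+2s}. -/
open intervalIntegral MeasureTheory Set

lemma cont_rpow (p : ℝ) (hp : 0 ≤ p) : Continuous fun x : ℝ => x ^ p :=
  continuous_iff_continuousAt.mpr fun x => Real.continuousAt_rpow_const x p (Or.inr hp)

lemma abs_rpow_intInt (c p a b : ℝ) (hp : 0 ≤ p) :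
    IntervalIntegrable (fun τ => |τ - c| ^ p) MeasureTheory.volume a b :=
  (((continuous_id.sub continuous_const).abs).rpow_const (fun _ => Or.inr hp)).intervalIntegrable a b

lemma rpow_intInt (p a b : ℝ) (hp : 0 ≤ p) :
    IntervalIntegrable (fun τ : ℝ => τ ^ p) MeasureTheory.volume a b :=
  (cont_rpow p hp).intervalIntegrable a b

lemma int_rpow (a : ℝ) (p : ℝ) (hp : 0 < p) :
    ∫ τ in (0:ℝ)..a, τ ^ p = a ^ (p+1) / (p+1) := by
  rw [integral_rpow (Or.inl (by linarith)), Real.zero_rpow (by linarith), sub_zero]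

lemma key (p t c : ℝ) (hp0 : 0 < p) (ht : 0 < t) :
    (2:ℝ) ^ (-p) * t ^ (p+1) / (p+1) ≤ ∫ τ in (0:ℝ)..t, |τ - c| ^ p := by
  have hp1 : (0:ℝ) < p + 1 := by linarith
  have h2p : (0:ℝ) < (2:ℝ) ^ p := Real.rpow_pos_of_pos two_pos p
  have h2le : (2:ℝ) ^ (-p) ≤ 1 :=
    Real.rpow_le_one_of_one_le_of_nonpos one_le_two (by linarith)
  have htq : (0:ℝ) ≤ t ^ (p+1) := Real.rpow_nonneg ht.le _
  rcases le_or_gt c 0 with hc | hc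
  · -- |τ - c| ≥ τ
    have hmono : ∫ τ in (0:ℝ)..t, τ ^ p ≤ ∫ τ in (0:ℝ)..t, |τ - c| ^ p := by
      apply integral_mono_on ht.le (rpow_intInt p 0 t hp0.le) (abs_rpow_intInt c p 0 t hp0.le)
      intro x hx
      have : x ≤ |x - c| := by rw [abs_of_nonneg (by linarith [hx.1])]; linarith
      exact Real.rpow_le_rpow hx.1 this hp0.le
    rw [int_rpow t p hp0] at hmono
    refine le_trans ?_ hmono
    apply div_le_div_of_nonneg_right ?_ hp1.le
    calc (2:ℝ) ^ (-p) * t ^ (p+1) ≤ 1 * t ^ (p+1) := by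
          exact mul_le_mul_of_nonneg_right h2le htq
      _ = t ^ (p+1) := one_mul _
  · rcases le_or_gt t c with hct | hct
    · -- c ≥ t : |τ - c| ≥ t - τ
      have hmono : ∫ τ in (0:ℝ)..t, (t - τ) ^ p ≤ ∫ τ in (0:ℝ)..t, |τ - c| ^ p := by
        apply integral_mono_on ht.le ?_ (abs_rpow_intInt c p 0 t hp0.le)
        · intro x hx
          have : t - x ≤ |x - c| := by rw [abs_of_nonpos (by linarith [hx.2])]; linarith
          exact Real.rpow_le_rpow (by linarith [hx.2]) this hp0.le
        · exact ((continuous_const.sub continuous_id).rpow_const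
            (fun _ => Or.inr hp0.le)).intervalIntegrable 0 t
      have heq : ∫ τ in (0:ℝ)..t, (t - τ) ^ p = ∫ τ in (0:ℝ)..t, τ ^ p := by
        have := intervalIntegral.integral_comp_sub_left (a := (0:ℝ)) (b := t)
          (fun u : ℝ => u ^ p) t
        simpa using this
      rw [heq, int_rpow t p hp0] at hmono
      refine le_trans ?_ hmono
      apply div_le_div_of_nonneg_right ?_ hp1.le
      calc (2:ℝ) ^ (-p) * t ^ (p+1) ≤ 1 * t ^ (p+1) := mul_le_mul_of_nonneg_right h2le htq
        _ = t ^ (p+1) := one_mul _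
    · -- 0 < c < t
      have hsplit : ∫ τ in (0:ℝ)..t, |τ - c| ^ p
          = (∫ τ in (0:ℝ)..c, |τ - c| ^ p) + ∫ τ in c..t, |τ - c| ^ p :=
        (integral_add_adjacent_intervals (abs_rpow_intInt c p 0 c hp0.le)
          (abs_rpow_intInt c p c t hp0.le)).symm
      have h1 : ∫ τ in (0:ℝ)..c, |τ - c| ^ p = c ^ (p+1) / (p+1) := by
        have e1 : ∫ τ in (0:ℝ)..c, |τ - c| ^ p = ∫ τ in (0:ℝ)..c, (c - τ) ^ p := by
          apply intervalIntegral.integral_congr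
          intro x hx
          rw [Set.uIcc_of_le hc.le] at hx
          dsimp only
          rw [abs_of_nonpos (by linarith [hx.2]), neg_sub]
        have e2 : ∫ τ in (0:ℝ)..c, (c - τ) ^ p = ∫ τ in (0:ℝ)..c, τ ^ p := by
          have := intervalIntegral.integral_comp_sub_left (a := (0:ℝ)) (b := c)
            (fun u : ℝ => u ^ p) c
          simpa using this
        rw [e1, e2, int_rpow c p hp0]
      have h2 : ∫ τ in c..t, |τ - c| ^ p = (t - c) ^ (p+1) / (p+1) := by
        have e1 : ∫ τ in c..t, |τ - c| ^ p = ∫ τ in c..t, (τ - c) ^ p := by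
          apply intervalIntegral.integral_congr
          intro x hx
          rw [Set.uIcc_of_le hct.le] at hx
          dsimp only
          rw [abs_of_nonneg (by linarith [hx.1])]
        have e2 : ∫ τ in c..t, (τ - c) ^ p = ∫ τ in (0:ℝ)..(t - c), τ ^ p := by
          have := intervalIntegral.integral_comp_sub_right (a := c) (b := t)
            (fun u : ℝ => u ^ p) c
          simpa using this
        rw [e1, e2, int_rpow (t - c) p hp0]
      rw [hsplit, h1, h2, ← add_div]
      apply div_le_div_of_nonneg_right ?_ hp1.le
      -- convexity: (t/2)^(p+1) ≤ (c^(p+1) + (t-c)^(p+1))/2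
      have hconv := (convexOn_rpow (p := p+1) (by linarith)).2
        (Set.mem_Ici.mpr hc.le) (Set.mem_Ici.mpr (by linarith : (0:ℝ) ≤ t - c))
        (by norm_num : (0:ℝ) ≤ 1/2) (by norm_num : (0:ℝ) ≤ 1/2) (by norm_num)
      simp only [smul_eq_mul] at hconv
      have hmid : (1/2 : ℝ) * c + (1/2) * (t - c) = t / 2 := by ring
      rw [hmid] at hconv
      have hdiv : (t/2) ^ (p+1) = t ^ (p+1) / 2 ^ (p+1) := Real.div_rpow ht.le (by norm_num) _
      have h2q : (2:ℝ) ^ (p+1) = 2 ^ p * 2 := by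
        rw [Real.rpow_add two_pos, Real.rpow_one]
      have hneg : (2:ℝ) ^ (-p) = (2 ^ p)⁻¹ := Real.rpow_neg (by norm_num) p
      rw [hdiv, h2q] at hconv
      rw [hneg]
      have : t ^ (p+1) / (2 ^ p * 2) = (2 ^ p)⁻¹ * t ^ (p+1) / 2 := by
        field_simp
      rw [this] at hconv
      linarith

/-- **Phase-mixing integral lower bound** (the mechanism behind the enhanced
dissipation rate for the toy model `∂_t g + y∂_x g = −ν(−Δ)^s g`): for `s ∈ (0,1]`,
all `η ∈ ℝ`, `k ≠ 0` and `t > 0`,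
`∫₀^t |η + kτ|^{2s} dτ ≥ (2^{−2s}/(1+2s)) |k|^{2s} t^{1+2s}`. -/
theorem phase_mixing_integral_lower_bound
    (s : ℝ) (hs : s ∈ Set.Ioc (0:ℝ) 1) (η k t : ℝ) (hk : k ≠ 0) (ht : 0 < t) :
    (2:ℝ) ^ (-(2 * s)) / (1 + 2 * s) * |k| ^ (2 * s) * t ^ (1 + 2 * s) ≤
      ∫ τ in (0:ℝ)..t, |η + k * τ| ^ (2 * s) := by
  obtain ⟨hs0, hs1⟩ := hs
  set p := 2 * s with hp
  have hp0 : 0 < p := by positivity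
  set c : ℝ := -η / k with hc
  have habs : ∀ τ : ℝ, |η + k * τ| = |k| * |τ - c| := by
    intro τ
    rw [← abs_mul]
    congr 1
    field_simp [hc]
    rw [hc, mul_sub, mul_div_assoc', mul_comm k (-η), mul_div_assoc, div_self hk, mul_one]; ring
  have hrw : ∀ τ : ℝ, |η + k * τ| ^ p = |k| ^ p * |τ - c| ^ p := by
    intro τ
    rw [habs τ, Real.mul_rpow (abs_nonneg k) (abs_nonneg _)]
  have hint : ∫ τ in (0:ℝ)..t, |η + k * τ| ^ p
      = |k| ^ p * ∫ τ in (0:ℝ)..t, |τ - c| ^ p := by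
    simp_rw [hrw]
    exact intervalIntegral.integral_const_mul _ _
  rw [hint]
  have hkey := key p t c hp0 ht
  have hkp : (0:ℝ) ≤ |k| ^ p := Real.rpow_nonneg (abs_nonneg k) p
  have := mul_le_mul_of_nonneg_left hkey hkp
  calc (2:ℝ) ^ (-p) / (1 + 2 * s) * |k| ^ p * t ^ (1 + 2 * s)
      = |k| ^ p * ((2:ℝ) ^ (-p) * t ^ (p + 1) / (p + 1)) := by
        rw [hp, add_comm (2*s) 1]; ring
    _ ≤ |k| ^ p * ∫ τ in (0:ℝ)..t, |τ - c| ^ p := this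
end
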